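/- Let G be a finite connected simple graph with positive real edge weights. Every cutset of globally minimum weight, i.e., every cutset D such that |D| ≤ |D'| for all cutsets D' of G, is relevant. -/
import Mathlib


open Finset
open scoped Classical

variable {V : Type*}

/-- The edge boundary `∂S`: the set of edges of `G` with exactly one endpoint in `S`. -/
noncomputable def edgeBoundary [Fintype V] [DecidableEq V] (G : SimpleGraph V) (S : Finset V) :
    Finset (Sym2 V) :=
  Finset.univ.filter fun e => e ∈ G.edgeSet ∧ ∃ u v, e = s(u, v) ∧ u ∈ S ∧ v ∉ S

/-- A cutset of `G` is an edge boundary `∂S` with `∅ ≠ S ≠ V`. -/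
def IsCutset [Fintype V] [DecidableEq V] (G : SimpleGraph V) (D : Finset (Sym2 V)) : Prop :=
  ∃ S : Finset V, S ≠ ∅ ∧ S ≠ Finset.univ ∧ D = edgeBoundary G S

/-- Symmetric difference of a finite family of edge sets: the set of edges occurring in an
odd number of members of the family. -/
noncomputable def symmDiffFamily [Fintype V] [DecidableEq V] {ι : Type*} (s : Finset ι)
    (f : ι → Finset (Sym2 V)) : Finset (Sym2 V) :=
  Finset.univ.filter fun e => Odd ((s.filter fun i => e ∈ f i).card)

/-- A cut basis: a family of `n - 1` cutsets such that every element of the cut space is the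
symmetric difference of a subfamily, and no nonempty subfamily has empty symmetric
difference. -/
def IsCutBasis [Fintype V] [DecidableEq V] (G : SimpleGraph V)
    (𝒟 : Finset (Finset (Sym2 V))) : Prop :=
  𝒟.card = Fintype.card V - 1 ∧
  (∀ D ∈ 𝒟, IsCutset G D) ∧
  (∀ S : Finset V, ∃ ℬ ⊆ 𝒟, edgeBoundary G S = symmDiffFamily ℬ id) ∧
  (∀ ℬ ⊆ 𝒟, ℬ.Nonempty → symmDiffFamily ℬ id ≠ ∅)

/-- The weight `|D|` of an edge set `D`. -/
def weight (w : Sym2 V → ℝ) (D : Finset (Sym2 V)) : ℝ :=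
  ∑ e ∈ D, w e

/-- A minimum cut basis: a cut basis of minimum total weight. -/
def IsMinCutBasis [Fintype V] [DecidableEq V] (G : SimpleGraph V) (w : Sym2 V → ℝ)
    (𝒟 : Finset (Finset (Sym2 V))) : Prop :=
  IsCutBasis G 𝒟 ∧
  ∀ 𝒟' : Finset (Finset (Sym2 V)), IsCutBasis G 𝒟' →
    ∑ D ∈ 𝒟, weight w D ≤ ∑ D ∈ 𝒟', weight w D

/-- A cutset is relevant if it belongs to at least one minimum cut basis. -/
def IsRelevant [Fintype V] [DecidableEq V] (G : SimpleGraph V) (w : Sym2 V → ℝ)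
    (D : Finset (Sym2 V)) : Prop :=
  ∃ 𝒟 : Finset (Finset (Sym2 V)), IsMinCutBasis G w 𝒟 ∧ D ∈ 𝒟

/-- A `u,v`-cut: a cutset of the form `∂S` with `u ∈ S` and `v ∉ S`. -/
def IsUVCut [Fintype V] [DecidableEq V] (G : SimpleGraph V) (u v : V)
    (D : Finset (Sym2 V)) : Prop :=
  ∃ S : Finset V, u ∈ S ∧ v ∉ S ∧ D = edgeBoundary G S

/-- A minimum-weight `u,v`-cut. -/
def IsMinUVCut [Fintype V] [DecidableEq V] (G : SimpleGraph V) (w : Sym2 V → ℝ) (u v : V)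
    (D : Finset (Sym2 V)) : Prop :=
  IsUVCut G u v D ∧ ∀ D' : Finset (Sym2 V), IsUVCut G u v D' → weight w D ≤ weight w D'

/-- A minimum `u,v`-cut with respect to unit weights (cardinality). -/
def IsMinUVCutCard [Fintype V] [DecidableEq V] (G : SimpleGraph V) (u v : V)
    (D : Finset (Sym2 V)) : Prop :=
  IsUVCut G u v D ∧ ∀ D' : Finset (Sym2 V), IsUVCut G u v D' → D.card ≤ D'.card


section AuxProof

variable [Fintype V] [DecidableEq V]

/-- Characteristic function of an edge set, valued in `ZMod 2`. -/
noncomputable def phiF (A : Finset (Sym2 V)) : Sym2 V → ZMod 2 :=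
  fun e => if e ∈ A then 1 else 0

lemma phiF_inj {A B : Finset (Sym2 V)} (h : phiF A = phiF B) : A = B := by
  ext e
  have := congrFun h e
  simp only [phiF] at this
  by_cases hA : e ∈ A <;> by_cases hB : e ∈ B <;> simp_all

lemma phiF_empty : phiF (∅ : Finset (Sym2 V)) = 0 := by
  funext e; simp [phiF]

lemma natCast_zmod2 (n : ℕ) : ((n : ZMod 2)) = if Odd n then 1 else 0 := by
  rw [← ZMod.natCast_mod]
  rcases Nat.mod_two_eq_zero_or_one n with h | h <;> simp [h, Nat.odd_iff]

lemma phiF_symmDiffFamily {ι : Type*} (s : Finset ι) (f : ι → Finset (Sym2 V)) :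
    phiF (symmDiffFamily s f) = ∑ i ∈ s, phiF (f i) := by
  funext e
  have hR : (∑ i ∈ s, phiF (f i)) e
      = if Odd ((s.filter fun i => e ∈ f i).card) then 1 else 0 := by
    rw [Finset.sum_apply]
    simp only [phiF]
    rw [Finset.sum_boole, natCast_zmod2]
  rw [hR]
  simp [phiF, symmDiffFamily]

lemma zmod2_fun_add_self (g : Sym2 V → ZMod 2) : g + g = 0 := by
  funext x
  have : ∀ a : ZMod 2, a + a = 0 := by decide
  exact this (g x)

lemma sum_phiF_symmDiff {α : Type*} [DecidableEq α] (s t : Finset α)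
    (f : α → Sym2 V → ZMod 2) :
    ∑ x ∈ symmDiff s t, f x = ∑ x ∈ s, f x + ∑ x ∈ t, f x := by
  have h1 : symmDiff s t = (s \ t) ∪ (t \ s) := by
    ext x
    simp only [Finset.mem_symmDiff, Finset.mem_union, Finset.mem_sdiff]
  rw [h1, Finset.sum_union disjoint_sdiff_sdiff]
  rw [← Finset.sum_inter_add_sum_sdiff s t f, ← Finset.sum_inter_add_sum_sdiff t s f,
    Finset.inter_comm t s]
  rw [show ∀ a b c : Sym2 V → ZMod 2, (a + b) + (a + c) = b + c + (a + a) from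
    fun a b c => by ring]
  rw [zmod2_fun_add_self, add_zero]

lemma mem_edgeBoundary {G : SimpleGraph V} {S : Finset V} {a b : V} :
    s(a, b) ∈ edgeBoundary G S ↔ G.Adj a b ∧ ((a ∈ S ∧ b ∉ S) ∨ (b ∈ S ∧ a ∉ S)) := by
  simp only [edgeBoundary, mem_filter, mem_univ, true_and, SimpleGraph.mem_edgeSet]
  constructor
  · rintro ⟨h, u, v, huv, hu, hv⟩
    refine ⟨h, ?_⟩
    rcases Sym2.eq_iff.1 huv with ⟨rfl, rfl⟩ | ⟨rfl, rfl⟩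
    · exact Or.inl ⟨hu, hv⟩
    · exact Or.inr ⟨hu, hv⟩
  · rintro ⟨h, ⟨ha, hb⟩ | ⟨hb, ha⟩⟩
    · exact ⟨h, a, b, rfl, ha, hb⟩
    · exact ⟨h, b, a, Sym2.eq_swap, hb, ha⟩

lemma crossing {G : SimpleGraph V} {S : Finset V} {a b : V} (p : G.Walk a b) :
    a ∈ S → b ∉ S → (edgeBoundary G S).Nonempty := by
  induction p with
  | nil => intro ha hb; exact absurd ha hb
  | @cons u v w h p ih =>
    intro ha hb
    by_cases hv : v ∈ S
    · exact ih hv hb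
    · exact ⟨s(u, v), mem_edgeBoundary.2 ⟨h, Or.inl ⟨ha, hv⟩⟩⟩

lemma edgeBoundary_nonempty {G : SimpleGraph V} (hG : G.Connected) {S : Finset V}
    (h1 : S ≠ ∅) (h2 : S ≠ Finset.univ) : (edgeBoundary G S).Nonempty := by
  obtain ⟨a, ha⟩ := Finset.nonempty_iff_ne_empty.2 h1
  obtain ⟨b, hb⟩ : ∃ b, b ∉ S := by
    by_contra h; push_neg at h; exact h2 (Finset.eq_univ_iff_forall.2 h)
  exact crossing (hG.preconnected a b).some ha hb

lemma edgeBoundary_compl (G : SimpleGraph V) (S : Finset V) :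
    edgeBoundary G Sᶜ = edgeBoundary G S := by
  ext e
  induction e using Sym2.ind with
  | _ a b =>
    simp only [mem_edgeBoundary, Finset.mem_compl]
    tauto

lemma mem_star {G : SimpleGraph V} {a b v : V} (hE : G.Adj a b) :
    s(a, b) ∈ edgeBoundary G ({v} : Finset V) ↔ v = a ∨ v = b := by
  have hab : a ≠ b := hE.ne
  simp only [mem_edgeBoundary, Finset.mem_singleton]
  constructor
  · rintro ⟨-, ⟨rfl, -⟩ | ⟨rfl, -⟩⟩
    · exact Or.inl rfl
    · exact Or.inr rfl
  · rintro (rfl | rfl)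
    · exact ⟨hE, Or.inl ⟨rfl, Ne.symm hab⟩⟩
    · exact ⟨hE, Or.inr ⟨rfl, hab⟩⟩

lemma phiF_edgeBoundary_sum (G : SimpleGraph V) (S : Finset V) :
    ∑ v ∈ S, phiF (edgeBoundary G {v}) = phiF (edgeBoundary G S) := by
  funext e
  rw [Finset.sum_apply]
  induction e using Sym2.ind with
  | _ a b =>
    by_cases hE : G.Adj a b
    · have hab : a ≠ b := hE.ne
      have hL : ∀ v ∈ S, phiF (edgeBoundary G ({v} : Finset V)) s(a, b)
          = (if v = a then (1 : ZMod 2) else 0) + (if v = b then 1 else 0) := by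
        intro v _
        rw [show phiF (edgeBoundary G ({v} : Finset V)) s(a, b)
            = if v = a ∨ v = b then (1 : ZMod 2) else 0 from by
          simp only [phiF]; rw [if_congr (mem_star hE) rfl rfl]]
        by_cases h1 : v = a <;> by_cases h2 : v = b <;> simp_all
      rw [Finset.sum_congr rfl hL, Finset.sum_add_distrib,
        Finset.sum_ite_eq' S a (fun _ => (1 : ZMod 2)),
        Finset.sum_ite_eq' S b (fun _ => (1 : ZMod 2))]
      by_cases haS : a ∈ S <;> by_cases hbS : b ∈ S <;>
        simp [phiF, mem_edgeBoundary, hE, haS, hbS] <;> decide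
    · have h0 : ∀ v ∈ S, phiF (edgeBoundary G ({v} : Finset V)) s(a, b) = 0 := by
        intro v _; simp [phiF, mem_edgeBoundary, hE]
      rw [Finset.sum_congr rfl h0]
      simp [phiF, mem_edgeBoundary, hE]

lemma starCut_inj {G : SimpleGraph V} (hG : G.Connected) {u v v0 : V} (hu : u ≠ v0)
    (hv : v ≠ v0) (h : edgeBoundary G ({u} : Finset V) = edgeBoundary G ({v} : Finset V)) :
    u = v := by
  by_contra huv
  have hnu : ∀ x, G.Adj u x → x = v := by
    intro x hx
    have h1 : s(u, x) ∈ edgeBoundary G ({u} : Finset V) := (mem_star hx).2 (Or.inl rfl)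
    rw [h] at h1
    rcases (mem_star hx).1 h1 with h2 | h2
    · exact absurd h2.symm huv
    · exact h2.symm
  have hnv : ∀ x, G.Adj v x → x = u := by
    intro x hx
    have h1 : s(v, x) ∈ edgeBoundary G ({v} : Finset V) := (mem_star hx).2 (Or.inl rfl)
    rw [← h] at h1
    rcases (mem_star hx).1 h1 with h2 | h2
    · exact absurd h2 huv
    · exact h2.symm
  have hbd : edgeBoundary G ({u, v} : Finset V) = ∅ := by
    ext e
    simp only [Finset.notMem_empty, iff_false]
    induction e using Sym2.ind with
    | _ a b =>
      rw [mem_edgeBoundary]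
      rintro ⟨hadj, ⟨ha, hb⟩ | ⟨hb, ha⟩⟩
      · rcases Finset.mem_insert.1 ha with rfl | ha'
        · exact hb (by rw [hnu b hadj]; simp)
        · rw [Finset.mem_singleton] at ha'; subst ha'
          exact hb (by rw [hnv b hadj]; simp)
      · rcases Finset.mem_insert.1 hb with rfl | hb'
        · exact ha (by rw [hnu a hadj.symm]; simp)
        · rw [Finset.mem_singleton] at hb'; subst hb'
          exact ha (by rw [hnv a hadj.symm]; simp)
  have hne : ({u, v} : Finset V) ≠ Finset.univ := by
    intro hE
    have : v0 ∈ ({u, v} : Finset V) := hE ▸ Finset.mem_univ v0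
    rcases Finset.mem_insert.1 this with h' | h'
    · exact hu h'.symm
    · rw [Finset.mem_singleton] at h'; exact hv h'.symm
  have := edgeBoundary_nonempty hG (S := {u, v}) (by simp) hne
  rw [hbd] at this
  exact Finset.not_nonempty_empty this

/-- The star family of fundamental vertex cuts avoiding `v0`. -/
noncomputable def starFam (G : SimpleGraph V) (v0 : V) : Finset (Finset (Sym2 V)) :=
  (Finset.univ.erase v0).image fun v => edgeBoundary G {v}

lemma symmDiffFamily_empty : symmDiffFamily (∅ : Finset (Finset (Sym2 V))) id = ∅ := by
  ext e
  simp [symmDiffFamily, Nat.odd_iff]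

lemma starFam_isCutBasis {G : SimpleGraph V} (hG : G.Connected) (v0 : V) :
    IsCutBasis G (starFam G v0) := by
  have hinj : ∀ s : Finset V, (∀ x ∈ s, x ≠ v0) →
      ∀ x ∈ s, ∀ y ∈ s, edgeBoundary G ({x} : Finset V) = edgeBoundary G {y} → x = y := by
    intro s hs x hx y hy hxy
    exact starCut_inj hG (hs x hx) (hs y hy) hxy
  refine ⟨?_, ?_, ?_, ?_⟩
  · rw [starFam, Finset.card_image_of_injOn, Finset.card_erase_of_mem (Finset.mem_univ v0),
      Finset.card_univ]
    intro x hx y hy hxy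
    exact starCut_inj hG (Finset.mem_erase.1 hx).1 (Finset.mem_erase.1 hy).1 hxy
  · intro B hB
    obtain ⟨v, hv, rfl⟩ := Finset.mem_image.1 hB
    refine ⟨{v}, by simp, ?_, rfl⟩
    intro hE
    exact (Finset.mem_erase.1 hv).1 (Finset.mem_singleton.1 (hE ▸ Finset.mem_univ v0)).symm
  · intro S
    set S' := if v0 ∈ S then Sᶜ else S with hS'
    have hv0 : v0 ∉ S' := by
      by_cases h : v0 ∈ S <;> simp [hS', h]
    have hbd : edgeBoundary G S = edgeBoundary G S' := by
      by_cases h : v0 ∈ S <;> simp [hS', h, edgeBoundary_compl]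
    refine ⟨S'.image (fun v => edgeBoundary G {v}), ?_, ?_⟩
    · apply Finset.image_subset_image
      intro v hv
      exact Finset.mem_erase.2 ⟨fun h => hv0 (h ▸ hv), Finset.mem_univ v⟩
    · rw [hbd]
      apply phiF_inj
      rw [phiF_symmDiffFamily]
      simp only [id]
      rw [Finset.sum_image (fun x hx y hy hxy =>
        starCut_inj (v0 := v0) hG (fun h => hv0 (by rw [← h]; exact hx))
          (fun h => hv0 (by rw [← h]; exact hy)) hxy)]
      exact (phiF_edgeBoundary_sum G S').symm
  · intro ℬ hsub hne heq
    set S := (Finset.univ.erase v0).filter (fun v => edgeBoundary G {v} ∈ ℬ) with hSdef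
    have hSsub : ∀ v ∈ S, v ≠ v0 := fun v hv => (Finset.mem_erase.1 (Finset.mem_filter.1 hv).1).1
    have himg : ℬ = S.image (fun v => edgeBoundary G {v}) := by
      ext B
      constructor
      · intro hB
        obtain ⟨v, hv, rfl⟩ := Finset.mem_image.1 (hsub hB)
        exact Finset.mem_image.2 ⟨v, Finset.mem_filter.2 ⟨hv, hB⟩, rfl⟩
      · intro hB
        obtain ⟨v, hv, rfl⟩ := Finset.mem_image.1 hB
        exact (Finset.mem_filter.1 hv).2
    have hS0 : v0 ∉ S := fun h => hSsub v0 h rfl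
    have hSne : S ≠ ∅ := by
      obtain ⟨B, hB⟩ := hne
      obtain ⟨v, hv, -⟩ := Finset.mem_image.1 (himg ▸ hB)
      exact Finset.ne_empty_of_mem hv
    have hSuniv : S ≠ Finset.univ := fun h => hS0 (h ▸ Finset.mem_univ v0)
    have hsd : symmDiffFamily ℬ id = edgeBoundary G S := by
      apply phiF_inj
      rw [phiF_symmDiffFamily]
      simp only [id]
      rw [himg, Finset.sum_image (fun x hx y hy hxy =>
        starCut_inj hG (hSsub x hx) (hSsub y hy) hxy)]
      exact phiF_edgeBoundary_sum G S
    rw [hsd] at heq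
    exact (edgeBoundary_nonempty hG hSne hSuniv).ne_empty heq

lemma exchange {G : SimpleGraph V} {𝒟 ℬ : Finset (Finset (Sym2 V))} {D B : Finset (Sym2 V)}
    (h𝒟 : IsCutBasis G 𝒟) (hDc : IsCutset G D) (hℬ : ℬ ⊆ 𝒟) (hBℬ : B ∈ ℬ)
    (hrep : D = symmDiffFamily ℬ id) (hDn : D ∉ 𝒟) :
    IsCutBasis G (insert D (𝒟.erase B)) := by
  obtain ⟨hcard, hcut, hspan, hind⟩ := h𝒟
  have hB𝒟 : B ∈ 𝒟 := hℬ hBℬ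
  have hDe : D ∉ 𝒟.erase B := fun h => hDn (Finset.mem_of_mem_erase h)
  have hphiD : phiF D = ∑ C ∈ ℬ, phiF C := by
    rw [hrep, phiF_symmDiffFamily]; simp only [id]
  refine ⟨?_, ?_, ?_, ?_⟩
  · rw [Finset.card_insert_of_notMem hDe, Finset.card_erase_of_mem hB𝒟]
    have : 1 ≤ 𝒟.card := Finset.card_pos.2 ⟨B, hB𝒟⟩
    omega
  · intro C hC
    rcases Finset.mem_insert.1 hC with rfl | hC
    · exact hDc
    · exact hcut C (Finset.mem_of_mem_erase hC)
  · intro S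
    obtain ⟨𝒜, h𝒜, hrepS⟩ := hspan S
    by_cases hB𝒜 : B ∈ 𝒜
    · set 𝒞 := symmDiff (𝒜.erase B) (ℬ.erase B) with h𝒞
      have h𝒞sub : 𝒞 ⊆ 𝒟.erase B := by
        intro x hx
        rcases Finset.mem_symmDiff.1 hx with ⟨h1, -⟩ | ⟨h1, -⟩
        · exact Finset.erase_subset_erase _ h𝒜 h1
        · exact Finset.erase_subset_erase _ hℬ h1
      have hD𝒞 : D ∉ 𝒞 := fun h => hDe (h𝒞sub h)
      refine ⟨insert D 𝒞, Finset.insert_subset_insert _ h𝒞sub, ?_⟩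
      apply phiF_inj
      rw [phiF_symmDiffFamily]
      simp only [id]
      rw [Finset.sum_insert hD𝒞]
      have hsum𝒞 : ∑ x ∈ 𝒞, phiF x = ∑ x ∈ 𝒜.erase B, phiF x + ∑ x ∈ ℬ.erase B, phiF x :=
        sum_phiF_symmDiff _ _ _
      have h𝒜' : ∑ x ∈ 𝒜, phiF x = phiF B + ∑ x ∈ 𝒜.erase B, phiF x :=
        (Finset.add_sum_erase _ _ hB𝒜).symm
      have hℬ' : phiF D = phiF B + ∑ x ∈ ℬ.erase B, phiF x := by
        rw [hphiD]; exact (Finset.add_sum_erase _ _ hBℬ).symm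
      rw [hrepS, phiF_symmDiffFamily]
      simp only [id]
      rw [hsum𝒞, hℬ', h𝒜']
      rw [show ∀ p q s : Sym2 V → ZMod 2, p + q + (s + q) = p + s + (q + q) from
        fun p q s => by ring]
      rw [zmod2_fun_add_self, add_zero]
    · refine ⟨𝒜, ?_, hrepS⟩
      intro x hx
      exact Finset.mem_insert_of_mem
        (Finset.mem_erase.2 ⟨fun h => hB𝒜 (h ▸ hx), h𝒜 hx⟩)
  · intro 𝒞 h𝒞 h𝒞ne heq
    have hzero : ∑ x ∈ 𝒞, phiF x = 0 := by
      have h' := congrArg phiF heq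
      rw [phiF_symmDiffFamily, phiF_empty] at h'
      simpa only [id] using h'
    by_cases hD𝒞 : D ∈ 𝒞
    · set 𝒞' := 𝒞.erase D with h𝒞'def
      have h𝒞' : 𝒞' ⊆ 𝒟.erase B := by
        intro x hx
        have hx1 := Finset.mem_erase.1 hx
        rcases Finset.mem_insert.1 (h𝒞 hx1.2) with h | h
        · exact absurd h hx1.1
        · exact h
      set ℰ := symmDiff ℬ 𝒞' with hℰdef
      have hℰsub : ℰ ⊆ 𝒟 := by
        intro x hx
        rcases Finset.mem_symmDiff.1 hx with ⟨h1, -⟩ | ⟨h1, -⟩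
        · exact hℬ h1
        · exact Finset.mem_of_mem_erase (h𝒞' h1)
      have hBℰ : B ∈ ℰ := Finset.mem_symmDiff.2
        (Or.inl ⟨hBℬ, fun h => (Finset.mem_erase.1 (h𝒞' h)).1 rfl⟩)
      have hsum : ∑ x ∈ ℰ, phiF x = 0 := by
        rw [hℰdef, sum_phiF_symmDiff, ← hphiD, h𝒞'def,
          Finset.add_sum_erase _ _ hD𝒞, hzero]
      refine hind ℰ hℰsub ⟨B, hBℰ⟩ ?_
      apply phiF_inj
      rw [phiF_symmDiffFamily, phiF_empty]
      simpa only [id] using hsum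
    · refine hind 𝒞 (fun x hx => ?_) h𝒞ne heq
      rcases Finset.mem_insert.1 (h𝒞 hx) with h | h
      · exact absurd (h ▸ hx) hD𝒞
      · exact Finset.mem_of_mem_erase h

end AuxProof

/-- In a finite connected simple graph with positive edge weights, every cutset of
globally minimum weight is relevant. -/
theorem global_min_cut_is_relevant [Fintype V] [DecidableEq V] (G : SimpleGraph V)
    (hG : G.Connected) (w : Sym2 V → ℝ) (hw : ∀ e ∈ G.edgeSet, 0 < w e)
    (D : Finset (Sym2 V)) (hD : IsCutset G D)
    (hmin : ∀ D' : Finset (Sym2 V), IsCutset G D' → weight w D ≤ weight w D') :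
    IsRelevant G w D := by
  obtain ⟨S₀, hS₀ne, hS₀univ, hDS₀⟩ := id hD
  obtain ⟨v0⟩ : Nonempty V := ⟨(Finset.nonempty_iff_ne_empty.2 hS₀ne).choose⟩
  have hDne : D ≠ ∅ := by
    rw [hDS₀]
    exact (edgeBoundary_nonempty hG hS₀ne hS₀univ).ne_empty
  have hℬne : ∀ ℬ : Finset (Finset (Sym2 V)), D = symmDiffFamily ℬ id → ℬ.Nonempty := by
    intro ℬ hrep
    rcases Finset.eq_empty_or_nonempty ℬ with rfl | h
    · exact absurd (hrep.trans symmDiffFamily_empty) hDne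
    · exact h
  have hex : ∃ 𝒟, IsCutBasis G 𝒟 ∧ D ∈ 𝒟 := by
    have hstar := starFam_isCutBasis (G := G) hG v0
    by_cases hmem : D ∈ starFam G v0
    · exact ⟨_, hstar, hmem⟩
    · obtain ⟨ℬ, hℬ, hrep⟩ := hstar.2.2.1 S₀
      rw [← hDS₀] at hrep
      obtain ⟨B, hB⟩ := hℬne ℬ hrep
      exact ⟨_, exchange hstar hD hℬ hB hrep hmem, Finset.mem_insert_self _ _⟩
  obtain ⟨𝒟₀, h𝒟₀mem, h𝒟₀min⟩ := Finset.exists_min_image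
    (Finset.univ.filter fun 𝒟 : Finset (Finset (Sym2 V)) => IsCutBasis G 𝒟 ∧ D ∈ 𝒟)
    (fun 𝒟 => ∑ C ∈ 𝒟, weight w C)
    (by
      obtain ⟨𝒟, h1, h2⟩ := hex
      exact ⟨𝒟, Finset.mem_filter.2 ⟨Finset.mem_univ _, h1, h2⟩⟩)
  rw [Finset.mem_filter] at h𝒟₀mem
  refine ⟨𝒟₀, ⟨h𝒟₀mem.2.1, ?_⟩, h𝒟₀mem.2.2⟩
  intro 𝒟' h𝒟'
  by_cases hD𝒟' : D ∈ 𝒟'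
  · exact h𝒟₀min 𝒟' (Finset.mem_filter.2 ⟨Finset.mem_univ _, h𝒟', hD𝒟'⟩)
  · obtain ⟨ℬ, hℬ, hrep⟩ := h𝒟'.2.2.1 S₀
    rw [← hDS₀] at hrep
    obtain ⟨B, hB⟩ := hℬne ℬ hrep
    have h𝒟'' := exchange h𝒟' hD hℬ hB hrep hD𝒟'
    have step1 : ∑ C ∈ 𝒟₀, weight w C ≤ ∑ C ∈ insert D (𝒟'.erase B), weight w C :=
      h𝒟₀min _ (Finset.mem_filter.2 ⟨Finset.mem_univ _, h𝒟'', Finset.mem_insert_self _ _⟩)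
    have hB𝒟' : B ∈ 𝒟' := hℬ hB
    have hDe : D ∉ 𝒟'.erase B := fun h => hD𝒟' (Finset.mem_of_mem_erase h)
    have heq : ∑ C ∈ insert D (𝒟'.erase B), weight w C
        = weight w D + (∑ C ∈ 𝒟', weight w C - weight w B) := by
      rw [Finset.sum_insert hDe, Finset.sum_erase_eq_sub hB𝒟']
    have hwB : weight w D ≤ weight w B := hmin B (h𝒟'.2.1 B hB𝒟')
    calc ∑ C ∈ 𝒟₀, weight w C ≤ ∑ C ∈ insert D (𝒟'.erase B), weight w C := step1
      _ = weight w D + (∑ C ∈ 𝒟', weight w C - weight w B) := heq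
      _ ≤ ∑ C ∈ 𝒟', weight w C := by linarith
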